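/- For every vector ψ ∈ H and every a ∈ {0,1}, setting aux := X̃^a ψ and letting ι_a(aux) ∈ H⊕H denote the vector |a⟩ ⊗ aux (i.e., ι₀(aux) = (aux, 0) and ι₁(aux) = (0, aux)), one has the exact identity ‖Vψ − ι_a(aux)‖² = (1/2)·‖(Z̃ − (−1)^a·1)ψ‖². -/

import Mathlib

/-- The projection `P⁰ = (1 + Z̃)/2`. -/
noncomputable def Pb0 {H : Type*} [AddCommGroup H] [Module ℂ H]
    (Zt : H →ₗ[ℂ] H) : H →ₗ[ℂ] H := ((1 : ℂ) / 2) • (1 + Zt)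

/-- The projection `P¹ = (1 − Z̃)/2`. -/
noncomputable def Pb1 {H : Type*} [AddCommGroup H] [Module ℂ H]
    (Zt : H →ₗ[ℂ] H) : H →ₗ[ℂ] H := ((1 : ℂ) / 2) • (1 - Zt)

/-- The SWAP-gate map `V : H → H⊕H`, `Vψ = (P⁰ψ, X̃P¹ψ)`. -/
noncomputable def VL {H : Type*} [AddCommGroup H] [Module ℂ H]
    (Zt Xt : H →ₗ[ℂ] H) : H →ₗ[ℂ] WithLp 2 (H × H) :=
  (WithLp.linearEquiv 2 ℂ (H × H)).symm.toLinearMap ∘ₗ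
    LinearMap.prod (Pb0 Zt) (Xt ∘ₗ Pb1 Zt)

/-- The inclusion `|0⟩ ⊗ w = (w, 0)` resp. `|1⟩ ⊗ w = (0, w)` of `H` into `H⊕H`. -/
noncomputable def iota {H : Type*} [AddCommGroup H] [Module ℂ H]
    (a : ℕ) (w : H) : WithLp 2 (H × H) :=
  (WithLp.equiv 2 (H × H)).symm (if a = 0 then (w, 0) else (0, w))

/- With `w := (Z̃ − (−1)^a)ψ`, the difference `Vψ − |a⟩ ⊗ X̃^a ψ` is `(w/2, −X̃ w/2)` for both values
of `a`; since `X̃` is an isometry each component carries a quarter of `‖w‖²`. -/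

theorem LinearMap.norm_map_of_adjoint_comp_self {𝕜 E F : Type*} [RCLike 𝕜]
    [NormedAddCommGroup E] [InnerProductSpace 𝕜 E] [FiniteDimensional 𝕜 E]
    [NormedAddCommGroup F] [InnerProductSpace 𝕜 F] [FiniteDimensional 𝕜 F]
    {A : E →ₗ[𝕜] F} (h : LinearMap.adjoint A ∘ₗ A = LinearMap.id) (x : E) : ‖A x‖ = ‖x‖ :=
  (LinearMap.norm_map_iff_inner_map_map A).mpr (fun x y => by
    rw [← LinearMap.adjoint_inner_left, ← LinearMap.comp_apply, h, LinearMap.id_apply]) x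

section SwapIsometry

variable {H : Type*} [AddCommGroup H] [Module ℂ H]

theorem VL_apply (Zt Xt : H →ₗ[ℂ] H) (ψ : H) :
    VL Zt Xt ψ = WithLp.toLp 2 (Pb0 Zt ψ, Xt (Pb1 Zt ψ)) :=
  rfl

theorem iota_zero (w : H) : iota 0 w = WithLp.toLp 2 (w, 0) :=
  rfl

theorem iota_one (w : H) : iota 1 w = WithLp.toLp 2 (0, w) :=
  rfl

theorem VL_sub_iota_eq (Zt Xt : H →ₗ[ℂ] H) (ψ : H) {a : ℕ} (ha : a = 0 ∨ a = 1) :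
    VL Zt Xt ψ - iota a ((Xt ^ a) ψ) =
      WithLp.toLp 2 (((1 : ℂ) / 2) • (Zt - ((-1 : ℂ)) ^ a • (1 : H →ₗ[ℂ] H)) ψ,
        Xt (-((1 : ℂ) / 2) • (Zt - ((-1 : ℂ)) ^ a • (1 : H →ₗ[ℂ] H)) ψ)) := by
  rcases ha with rfl | rfl
  · rw [VL_apply, iota_zero, ← WithLp.toLp_sub, Prod.mk_sub_mk, sub_zero]
    simp only [Pb0, Pb1, LinearMap.smul_apply, LinearMap.add_apply, LinearMap.sub_apply,
      Module.End.one_apply, pow_zero, one_smul]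
    exact congrArg (WithLp.toLp 2) (Prod.ext (by module) (congrArg Xt (by module)))
  · rw [VL_apply, iota_one, ← WithLp.toLp_sub, Prod.mk_sub_mk, sub_zero, pow_one, ← map_sub]
    simp only [Pb0, Pb1, LinearMap.smul_apply, LinearMap.add_apply, LinearMap.sub_apply,
      Module.End.one_apply, pow_one, neg_smul, one_smul, LinearMap.neg_apply]
    exact congrArg (WithLp.toLp 2) (Prod.ext (by module) (congrArg Xt (by module)))

end SwapIsometry

theorem swap_isometry_state_extraction_general {H : Type*} [NormedAddCommGroup H]
    [InnerProductSpace ℂ H] [FiniteDimensional ℂ H]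
    (Zt Xt : H →ₗ[ℂ] H)
    (hXt₁ : LinearMap.adjoint Xt * Xt = 1)
    (ψ : H) (a : ℕ) (ha : a = 0 ∨ a = 1) :
    ‖VL Zt Xt ψ - iota a ((Xt ^ a) ψ)‖ ^ 2
      = (1 / 2) * ‖(Zt - ((-1 : ℂ)) ^ a • (1 : H →ₗ[ℂ] H)) ψ‖ ^ 2 := by
  rw [VL_sub_iota_eq Zt Xt ψ ha, WithLp.prod_norm_sq_eq_of_L2, WithLp.toLp_fst, WithLp.toLp_snd,
    LinearMap.norm_map_of_adjoint_comp_self hXt₁, norm_smul, norm_smul, norm_neg]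
  norm_num
  ring

/-- For every `ψ ∈ H` and `a ∈ {0,1}`, with `aux := X̃^a ψ` one has the
exact identity `‖Vψ − |a⟩⊗aux‖² = (1/2)·‖(Z̃ − (−1)^a·1)ψ‖²`. -/
theorem swap_isometry_state_extraction {H : Type*} [NormedAddCommGroup H]
    [InnerProductSpace ℂ H] [FiniteDimensional ℂ H]
    (Zt Xt : H →ₗ[ℂ] H) (hZt : Zt.IsSymmetric) (hZsq : Zt * Zt = 1)
    (hXt₁ : LinearMap.adjoint Xt * Xt = 1) (hXt₂ : Xt * LinearMap.adjoint Xt = 1)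
    (ψ : H) (a : ℕ) (ha : a = 0 ∨ a = 1) :
    ‖VL Zt Xt ψ - iota a ((Xt ^ a) ψ)‖ ^ 2
      = (1 / 2) * ‖(Zt - ((-1 : ℂ)) ^ a • (1 : H →ₗ[ℂ] H)) ψ‖ ^ 2 :=
  swap_isometry_state_extraction_general Zt Xt hXt₁ ψ a ha
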